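/- arXiv:1311.1973 — 5 statements merged into one kernel-verified Lean document; each statement's English description precedes it below -/
import Mathlib

section
/- Let α, β, λ, μ, ν be real numbers with β ≠ 0, and let M be the symmetric matrix M = !![α, β, 0; β, λ, μ; 0, μ, ν] in Matrix (Fin 3) (Fin 3) ℝ. If μ = 0 and ν² − (α + λ)ν + (αλ − β²) = 0, then M has exactly two distinct real eigenvalues, i.e. the set spectrum ℝ M has exactly two elements. -/
/-!
With `μ = 0` the matrix is block diagonal, so its characteristic polynomial is
`(X - ν) * ((X - α) * (X - λ) - β²)`. The hypothesis on `ν` says that `ν` is a root of the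
quadratic factor, whose other root is `α + λ - ν`; hence the spectrum is `{ν, α + λ - ν}`.
The two roots are distinct because the discriminant `(α - λ)² + 4β²` is positive when `β ≠ 0`.
-/

open Matrix Polynomial

theorem Matrix.charpoly_of_fin_three_block {R : Type*} [CommRing R] (a b b' c d : R) :
    (!![a, b, 0; b', c, 0; 0, 0, d] : Matrix (Fin 3) (Fin 3) R).charpoly
      = (X - C d) * ((X - C a) * (X - C c) - C (b * b')) := by
  rw [charpoly, det_fin_three]
  simp only [Fin.isValue, charmatrix_apply_eq, of_apply, cons_val', cons_val_zero,
    cons_val_fin_one, cons_val_one, cons_val, ne_eq, Fin.reduceEq, not_false_eq_true,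
    charmatrix_apply_ne, map_zero, neg_zero, mul_zero, sub_zero, zero_ne_one, one_ne_zero,
    mul_neg, neg_mul, neg_neg, add_zero, zero_mul, map_mul]
  ring

theorem Matrix.spectrum_of_fin_three_block {K : Type*} [Field K] {a b b' c d : K}
    (hd : (d - a) * (d - c) = b * b') :
    spectrum K (!![a, b, 0; b', c, 0; 0, 0, d] : Matrix (Fin 3) (Fin 3) K) = {d, a + c - d} := by
  ext x
  have hfactor : (x - d) * ((x - a) * (x - c) - b * b') = (x - d) ^ 2 * (x - (a + c - d)) := by
    linear_combination (x - d) * hd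
  simp only [mem_spectrum_iff_isRoot_charpoly, charpoly_of_fin_three_block, IsRoot.def, eval_mul,
    eval_sub, eval_X, eval_C, hfactor, mul_eq_zero, pow_eq_zero_iff two_ne_zero, sub_eq_zero,
    Set.mem_insert_iff, Set.mem_singleton_iff]

theorem ne_add_sub_of_sub_mul_sub_eq_mul_self {K : Type*} [Field K] [LinearOrder K]
    [IsStrictOrderedRing K] {a b c d : K} (hb : b ≠ 0) (hd : (d - a) * (d - c) = b * b) :
    d ≠ a + c - d := by
  intro h
  have hc : c = 2 * d - a := by linear_combination -h
  subst hc
  nlinarith [mul_self_pos.2 hb, sq_nonneg (d - a)]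

/-- The 'if' direction of the algebraic content of Proposition 4.1:
if `μ = 0` and `ν² − (α+λ)ν + (αλ − β²) = 0`, the shape-operator matrix
`!![α, β, 0; β, λ, μ; 0, μ, ν]` with `β ≠ 0` has exactly two distinct real eigenvalues. -/
theorem stmt0 (α β l μ ν : ℝ) (hβ : β ≠ 0) (hμ : μ = 0)
    (hν : ν ^ 2 - (α + l) * ν + (α * l - β ^ 2) = 0) :
    (spectrum ℝ (!![α, β, 0; β, l, μ; 0, μ, ν] : Matrix (Fin 3) (Fin 3) ℝ)).ncard = 2 := by
  subst hμ
  have hroot : (ν - α) * (ν - l) = β * β := by linear_combination hν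
  rw [spectrum_of_fin_three_block hroot,
    Set.ncard_pair (ne_add_sub_of_sub_mul_sub_eq_mul_self hβ hroot)]
end

section
/- Let α, β, λ, μ, ν be real numbers with β ≠ 0, and let M be the symmetric matrix M = !![α, β, 0; β, λ, μ; 0, μ, ν] in Matrix (Fin 3) (Fin 3) ℝ. If M has at most two distinct real eigenvalues (i.e. the set spectrum ℝ M has at most two elements), then μ = 0 and ν² − (α + λ)ν + (αλ − β²) = 0. -/
/-! Conjugating by the unitary eigenvector matrix, a Hermitian matrix whose real spectrum lies in
`{a, b}` satisfies `(M - a)(M - b) = 0`, as the diagonal matrix of its eigenvalues does. For the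
given tridiagonal `M`, the `(0,2)`, `(0,1)` and `(0,0)` entries of this identity read `βμ = 0`,
`β(α + l - a - b) = 0` and `(α - a)(α - b) + β² = 0`; since `β ≠ 0` they give `μ = 0`,
`a + b = α + l` and `ab = αl - β²`, and the `(2,2)` entry `μ² + (ν - a)(ν - b) = 0` is then the
quadratic relation for `ν`. -/

open Matrix Unitary

theorem Matrix.IsHermitian.sub_smul_one_mul_sub_smul_one_eq_zero {n 𝕜 : Type*} [Fintype n]
    [DecidableEq n] [RCLike 𝕜] {A : Matrix n n 𝕜} (hA : A.IsHermitian) {a b : ℝ}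
    (h : spectrum ℝ A ⊆ {a, b}) : (A - (a : 𝕜) • 1) * (A - (b : 𝕜) • 1) = 0 := by
  have hD : (diagonal (RCLike.ofReal ∘ hA.eigenvalues) - (a : 𝕜) • (1 : Matrix n n 𝕜)) *
      (diagonal (RCLike.ofReal ∘ hA.eigenvalues) - (b : 𝕜) • 1) = 0 := by
    rw [smul_one_eq_diagonal, smul_one_eq_diagonal, diagonal_sub, diagonal_sub,
      diagonal_mul_diagonal, diagonal_eq_zero]
    ext i
    obtain hi | hi : hA.eigenvalues i = a ∨ hA.eigenvalues i = b :=
      h (hA.eigenvalues_mem_spectrum_real i)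
    all_goals simp [hi]
  rw [hA.spectral_theorem, ← map_one (conjStarAlgAut 𝕜 _ hA.eigenvectorUnitary), ← map_smul,
    ← map_smul, ← map_sub, ← map_sub, ← map_mul, hD, map_zero]

theorem eq_zero_and_quadratic_of_sub_smul_one_mul_sub_smul_one_eq_zero {α β l μ ν a b : ℝ}
    (hβ : β ≠ 0)
    (h : (!![α, β, 0; β, l, μ; 0, μ, ν] - a • 1) * (!![α, β, 0; β, l, μ; 0, μ, ν] - b • 1) = 0) :
    μ = 0 ∧ ν ^ 2 - (α + l) * ν + (α * l - β ^ 2) = 0 := by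
  have e00 : (α - a) * (α - b) + β * β = 0 := by
    simpa [mul_apply, Fin.sum_univ_three, one_apply] using congrFun₂ h 0 0
  have e01 : (α - a) * β + β * (l - b) = 0 := by
    simpa [mul_apply, Fin.sum_univ_three, one_apply] using congrFun₂ h 0 1
  have e02 : β = 0 ∨ μ = 0 := by
    simpa [mul_apply, Fin.sum_univ_three, one_apply] using congrFun₂ h 0 2
  have e22 : μ * μ + (ν - a) * (ν - b) = 0 := by
    simpa [mul_apply, Fin.sum_univ_three, one_apply] using congrFun₂ h 2 2
  have hμ : μ = 0 := e02.resolve_left hβ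
  have hsum : a + b = α + l :=
    mul_left_cancel₀ hβ (by linear_combination -e01)
  exact ⟨hμ, by linear_combination e22 + ν * hsum - e00 - α * hsum - μ * hμ⟩

/-- The 'only if' direction of the algebraic content of Proposition 4.1:
if the shape-operator matrix `!![α, β, 0; β, λ, μ; 0, μ, ν]` with `β ≠ 0` has at most two
distinct real eigenvalues, then `μ = 0` and `ν² − (α+λ)ν + (αλ − β²) = 0`. -/
theorem stmt1 (α β l μ ν : ℝ) (hβ : β ≠ 0)
    (h2 : ∃ a b : ℝ,
      spectrum ℝ (!![α, β, 0; β, l, μ; 0, μ, ν] : Matrix (Fin 3) (Fin 3) ℝ) ⊆ {a, b}) :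
    μ = 0 ∧ ν ^ 2 - (α + l) * ν + (α * l - β ^ 2) = 0 := by
  obtain ⟨a, b, hab⟩ := h2
  have hM : (!![α, β, 0; β, l, μ; 0, μ, ν] : Matrix (Fin 3) (Fin 3) ℝ).IsHermitian := by
    ext i j
    fin_cases i <;> fin_cases j <;> simp
  exact eq_zero_and_quadratic_of_sub_smul_one_mul_sub_smul_one_eq_zero hβ
    (hM.sub_smul_one_mul_sub_smul_one_eq_zero hab)
end

section
/- Let c ∈ ℝ and let α₀, β₀, λ₀ be real numbers with β₀ ≠ 0. Then there exist ε > 0 and functions α, β, λ, ν : ℝ → ℝ with α(0) = α₀, β(0) = β₀, λ(0) = λ₀, such that for every s in the open interval Ioo (−ε) ε: β(s) ≠ 0, the constraint (ν(s) − α(s))(ν(s) − λ(s)) = β(s)² holds, and the derivatives satisfy HasDerivAt α (β(s)·(α(s) + λ(s) − 3ν(s))) s, HasDerivAt β (β(s)² + λ(s)² + ν(s)·(α(s) − 2λ(s)) + c) s, and HasDerivAt λ ((λ(s) − ν(s))·(λ(s)² − α(s)λ(s) − c)/β(s) + β(s)·(2λ(s) + ν(s))) s. -/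
/-!
Solving the constraint for `ν` by the quadratic formula, `ν = (α + λ + √((α - λ)² + 4β²)) / 2`,
which is smooth wherever `β ≠ 0`, turns (4.3) into an autonomous `C¹` system in `(α, β, λ)` on
the open set `β ≠ 0`. Picard–Lindelöf gives a local solution, and by continuity it stays in that
set for short time.
-/

open Set Topology

theorem ContDiffAt.exists_eq_forall_mem_Ioo_hasDerivAt_mem {E : Type*} [NormedAddCommGroup E]
    [NormedSpace ℝ E] [CompleteSpace E] {v : E → E} {x₀ : E} (hv : ContDiffAt ℝ 1 v x₀)
    (t₀ : ℝ) {U : Set E} (hU : U ∈ 𝓝 x₀) :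
    ∃ f : ℝ → E, f t₀ = x₀ ∧ ∃ ε > (0 : ℝ),
      ∀ t ∈ Ioo (t₀ - ε) (t₀ + ε), f t ∈ U ∧ HasDerivAt f (v (f t)) t := by
  obtain ⟨f, hf₀, ε, hε, hf⟩ :=
    hv.exists_forall_mem_closedBall_exists_eq_forall_mem_Ioo_hasDerivAt₀ t₀
  have hderiv : ∀ᶠ t in 𝓝 t₀, HasDerivAt f (v (f t)) t :=
    Metric.eventually_nhds_iff_ball.mpr ⟨ε, hε, fun t ht => hf t (Real.ball_eq_Ioo t₀ ε ▸ ht)⟩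
  have hmem : ∀ᶠ t in 𝓝 t₀, f t ∈ U :=
    hderiv.self_of_nhds.continuousAt.preimage_mem_nhds (hf₀ ▸ hU)
  obtain ⟨δ, hδ, hfδ⟩ := Metric.eventually_nhds_iff_ball.mp (hmem.and hderiv)
  exact ⟨f, hf₀, δ, hδ, fun t ht => hfδ t (Real.ball_eq_Ioo t₀ δ ▸ ht)⟩

section ProdComponents

variable {𝕜 E F : Type*} [NontriviallyNormedField 𝕜] [NormedAddCommGroup E] [NormedSpace 𝕜 E]
  [NormedAddCommGroup F] [NormedSpace 𝕜 F] {f : 𝕜 → E × F} {f' : E × F} {t : 𝕜}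

theorem HasDerivAt.fst (h : HasDerivAt f f' t) : HasDerivAt (fun s => (f s).1) f'.1 t :=
  (ContinuousLinearMap.fst 𝕜 E F).hasFDerivAt.comp_hasDerivAt t h

theorem HasDerivAt.snd (h : HasDerivAt f f' t) : HasDerivAt (fun s => (f s).2) f'.2 t :=
  (ContinuousLinearMap.snd 𝕜 E F).hasFDerivAt.comp_hasDerivAt t h

end ProdComponents

noncomputable def upperRoot (a b l : ℝ) : ℝ :=
  (a + l + √((a - l) ^ 2 + 4 * b ^ 2)) / 2

theorem upperRoot_sub_mul_sub (a b l : ℝ) :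
    (upperRoot a b l - a) * (upperRoot a b l - l) = b ^ 2 := by
  have hsq := Real.sq_sqrt (by positivity : 0 ≤ (a - l) ^ 2 + 4 * b ^ 2)
  unfold upperRoot
  linear_combination hsq / 4

theorem contDiffAt_upperRoot {n : WithTop ℕ∞} {p : ℝ × ℝ × ℝ} (hb : p.2.1 ≠ 0) :
    ContDiffAt ℝ n (fun q : ℝ × ℝ × ℝ => upperRoot q.1 q.2.1 q.2.2) p := by
  have hdisc : (p.1 - p.2.2) ^ 2 + 4 * p.2.1 ^ 2 ≠ 0 := by positivity
  have hsqrt := (Real.contDiffAt_sqrt (n := n) hdisc).comp p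
    (by fun_prop : ContDiffAt ℝ n (fun q : ℝ × ℝ × ℝ => (q.1 - q.2.2) ^ 2 + 4 * q.2.1 ^ 2) p)
  unfold upperRoot
  fun_prop (disch := norm_num)

noncomputable def systemField (c : ℝ) (p : ℝ × ℝ × ℝ) : ℝ × ℝ × ℝ :=
  let (α, β, l) := p
  let ν := upperRoot α β l
  (β * (α + l - 3 * ν),
   β ^ 2 + l ^ 2 + ν * (α - 2 * l) + c,
   (l - ν) * (l ^ 2 - α * l - c) / β + β * (2 * l + ν))

theorem contDiffAt_systemField (c : ℝ) {n : WithTop ℕ∞} {p : ℝ × ℝ × ℝ} (hβ : p.2.1 ≠ 0) :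
    ContDiffAt ℝ n (systemField c) p := by
  have hν := contDiffAt_upperRoot (n := n) hβ
  unfold systemField
  fun_prop (disch := assumption)

/-- Local existence of solutions of the ODE system (4.3) satisfying the algebraic
constraint `(ν − α)(ν − λ) = β²`, for any initial data with `β₀ ≠ 0`. -/
theorem stmt6 (c α₀ β₀ l₀ : ℝ) (hβ₀ : β₀ ≠ 0) :
    ∃ (ε : ℝ), 0 < ε ∧ ∃ (α β l ν : ℝ → ℝ),
      α 0 = α₀ ∧ β 0 = β₀ ∧ l 0 = l₀ ∧
      ∀ s ∈ Ioo (-ε) ε,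
        β s ≠ 0 ∧
        (ν s - α s) * (ν s - l s) = (β s) ^ 2 ∧
        HasDerivAt α (β s * (α s + l s - 3 * ν s)) s ∧
        HasDerivAt β ((β s) ^ 2 + (l s) ^ 2 + ν s * (α s - 2 * l s) + c) s ∧
        HasDerivAt l
          ((l s - ν s) * ((l s) ^ 2 - α s * l s - c) / β s + β s * (2 * l s + ν s)) s := by
  have hU : {p : ℝ × ℝ × ℝ | p.2.1 ≠ 0} ∈ 𝓝 (α₀, β₀, l₀) :=
    (isOpen_ne_fun (by fun_prop) continuous_const).mem_nhds hβ₀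
  obtain ⟨f, hf₀, ε, hε, hf⟩ :=
    (contDiffAt_systemField c hβ₀).exists_eq_forall_mem_Ioo_hasDerivAt_mem 0 hU
  refine ⟨ε, hε, fun s => (f s).1, fun s => (f s).2.1, fun s => (f s).2.2,
    fun s => upperRoot (f s).1 (f s).2.1 (f s).2.2, by simp [hf₀], by simp [hf₀], by simp [hf₀],
    fun s hs => ?_⟩
  obtain ⟨hβ, hf'⟩ := hf s (by simpa using hs)
  exact ⟨hβ, upperRoot_sub_mul_sub _ _ _, hf'.fst, hf'.snd.fst, hf'.snd.snd⟩
end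

section
/- Let c ∈ ℝ, let I ⊂ ℝ be an open interval, and let α, β, λ, ν : ℝ → ℝ be functions such that for all s ∈ I: β(s) ≠ 0, the constraint (ν(s) − α(s))(ν(s) − λ(s)) = β(s)² holds, HasDerivAt α (β(s)·(α(s) + λ(s) − 3ν(s))) s, HasDerivAt β (β(s)² + λ(s)² + ν(s)·(α(s) − 2λ(s)) + c) s, HasDerivAt λ ((λ(s) − ν(s))·(λ(s)² − α(s)λ(s) − c)/β(s) + β(s)·(2λ(s) + ν(s))) s, and ν is differentiable at s. Then for all s ∈ I, the derivative of ν at s equals 3·c·β(s)·(ν(s) − α(s)) / (β(s)² + (ν(s) − α(s))²). -/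
/-!
Differentiating the constraint `(ν - α)(ν - λ) = β²`, which holds on a neighbourhood of `s`, gives
a linear equation for `ν'` with coefficient `2ν - α - λ`. That coefficient cannot vanish: otherwise
`ν - λ = -(ν - α)` and the constraint would read `-(ν - α)² = β² > 0`. Solving for `ν'` and
reducing modulo the constraint leaves `ν' = 3cβ(ν - α) / (β² + (ν - α)²)`.
-/

lemma two_mul_sub_sub_ne_zero_of_mul_eq_sq {a b L n : ℝ} (hb : b ≠ 0)
    (hK : (n - a) * (n - L) = b ^ 2) : 2 * n - a - L ≠ 0 := by
  intro h
  have hnL : n - L = -(n - a) := by linarith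
  rw [hnL] at hK
  nlinarith [sq_nonneg (n - a), sq_pos_of_ne_zero hb]

/-- `d` is the value of `ν'` at a point where `α, β, λ, ν, c` take the values `a, b, L, n, c`,
and `hD` is the differentiated constraint. -/
lemma eq_of_differentiated_constraint {a b L n c d : ℝ} (hb : b ≠ 0)
    (hK : (n - a) * (n - L) = b ^ 2)
    (hD : (d - b * (a + L - 3 * n)) * (n - L)
      + (n - a) * (d - ((L - n) * (L ^ 2 - a * L - c) / b + b * (2 * L + n)))
      - 2 * b * (b ^ 2 + L ^ 2 + n * (a - 2 * L) + c) = 0) :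
    d = 3 * c * b * (n - a) / (b ^ 2 + (n - a) ^ 2) := by
  have hsolved : d * (2 * n - a - L) * b =
      b * (a + L - 3 * n) * (n - L) * b
      + ((L - n) * (L ^ 2 - a * L - c) + b * (2 * L + n) * b) * (n - a)
      + 2 * b ^ 2 * (b ^ 2 + L ^ 2 + n * (a - 2 * L) + c) := by
    field_simp at hD
    linear_combination hD
  have key : d * (b ^ 2 + (n - a) ^ 2) * ((2 * n - a - L) * b) =
      3 * c * b * (n - a) * ((2 * n - a - L) * b) := by
    linear_combination (b ^ 2 + (n - a) ^ 2) * hsolved +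
      (c * n ^ 2 - L ^ 2 * n ^ 2 - 2 * b ^ 2 * c - 2 * b ^ 2 * n ^ 2 - b ^ 2 * L ^ 2
        - 2 * b ^ 4 - 2 * a * c * n + a * L * n ^ 2 + 2 * a * L ^ 2 * n
        + 4 * a * b ^ 2 * n + a * b ^ 2 * L + a ^ 2 * c - 2 * a ^ 2 * L * n
        - a ^ 2 * L ^ 2 - 2 * a ^ 2 * b ^ 2 + a ^ 3 * L) * hK
  rw [eq_div_iff (by positivity)]
  exact mul_right_cancel₀ (mul_ne_zero (two_mul_sub_sub_ne_zero_of_mul_eq_sq hb hK) hb) key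

lemma HasDerivAt.eq_zero_of_eventuallyEq_zero {f : ℝ → ℝ} {f' s : ℝ} (hf : HasDerivAt f f' s)
    (h : f =ᶠ[nhds s] 0) : f' = 0 :=
  hf.unique ((hasDerivAt_const s 0).congr_of_eventuallyEq h)

theorem stmt8_general (c : ℝ) (I : Set ℝ) (hI : IsOpen I)
    (α β l ν : ℝ → ℝ)
    (h : ∀ s ∈ I, β s ≠ 0 ∧
      (ν s - α s) * (ν s - l s) = (β s) ^ 2 ∧
      HasDerivAt α (β s * (α s + l s - 3 * ν s)) s ∧
      HasDerivAt β ((β s) ^ 2 + (l s) ^ 2 + ν s * (α s - 2 * l s) + c) s ∧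
      HasDerivAt l
        ((l s - ν s) * ((l s) ^ 2 - α s * l s - c) / β s + β s * (2 * l s + ν s)) s ∧
      DifferentiableAt ℝ ν s) :
    ∀ s ∈ I, deriv ν s = 3 * c * β s * (ν s - α s) / ((β s) ^ 2 + (ν s - α s) ^ 2) := by
  intro s hs
  obtain ⟨hβ, hK, hα, hβ', hl, hν⟩ := h s hs
  have hconstraint : (ν - α) * (ν - l) - β * β =ᶠ[nhds s] 0 := by
    filter_upwards [hI.mem_nhds hs] with t ht
    simp [(h t ht).2.1, ← sq]
  have hF := ((hν.hasDerivAt.sub hα).mul (hν.hasDerivAt.sub hl)).sub (hβ'.mul hβ')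
  simp only [Pi.sub_apply] at hF
  refine eq_of_differentiated_constraint hβ hK ?_
  linear_combination hF.eq_zero_of_eventuallyEq_zero hconstraint

/-- Along a solution of the ODE system (4.3) satisfying the constraint
`(ν − α)(ν − λ) = β²` with `β` nonvanishing, the derivative of `ν` is
`3cβ(ν − α)/(β² + (ν − α)²)` (equation (5.9), i.e. `dν/ds = 3cτ/(1 + τ²)`). -/
theorem stmt8 (c : ℝ) (I : Set ℝ) (hI : IsOpen I) (hI' : I.OrdConnected)
    (α β l ν : ℝ → ℝ)
    (h : ∀ s ∈ I, β s ≠ 0 ∧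
      (ν s - α s) * (ν s - l s) = (β s) ^ 2 ∧
      HasDerivAt α (β s * (α s + l s - 3 * ν s)) s ∧
      HasDerivAt β ((β s) ^ 2 + (l s) ^ 2 + ν s * (α s - 2 * l s) + c) s ∧
      HasDerivAt l
        ((l s - ν s) * ((l s) ^ 2 - α s * l s - c) / β s + β s * (2 * l s + ν s)) s ∧
      DifferentiableAt ℝ ν s) :
    ∀ s ∈ I, deriv ν s = 3 * c * β s * (ν s - α s) / ((β s) ^ 2 + (ν s - α s) ^ 2) :=
  stmt8_general c I hI α β l ν h
end

section
/- Let c ∈ ℝ, let I ⊂ ℝ be an open interval, and let α, β, λ, ν : ℝ → ℝ be functions such that for all s ∈ I: β(s) ≠ 0, (ν(s) − α(s))(ν(s) − λ(s)) = β(s)², HasDerivAt α (β(s)·(α(s) + λ(s) − 3ν(s))) s, HasDerivAt β (β(s)² + λ(s)² + ν(s)·(α(s) − 2λ(s)) + c) s, HasDerivAt λ ((λ(s) − ν(s))·(λ(s)² − α(s)λ(s) − c)/β(s) + β(s)·(2λ(s) + ν(s))) s, and ν is differentiable at s. Define τ : ℝ → ℝ by τ(s) = (ν(s) − α(s))/β(s).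 Then for all s ∈ I, τ is differentiable at s with derivative ν(s)·(1 + τ(s)²) + c·τ(s)·(2 − τ(s)²)/(β(s)·(1 + τ(s)²)). -/
/-!
Differentiating the constraint `(ν - α)(ν - λ) = β²`, which holds on an open set, gives a
linear equation for `ν'` with coefficient `β(τ + 1/τ) ≠ 0`; eliminating `ν'` from the quotient
rule for `τ = (ν - α)/β` leaves `τ' = τ(β'(1 - τ²) + τ(λ' - α'))/(β(1 + τ²))`. Substituting
the ODE and the parametrisation `α = ν - βτ`, `λ = ν - β/τ` of the constraint gives (5.10).
-/

open Filter Topology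

lemma ne_zero_and_eq_sub_div_of_mul_eq_sq {K : Type*} [Field K] {a b l n t : K} (hb : b ≠ 0)
    (hC : (n - a) * (n - l) = b ^ 2) (ht : n - a = b * t) : t ≠ 0 ∧ l = n - b / t := by
  have ht0 : t ≠ 0 := right_ne_zero_of_mul (ht ▸ left_ne_zero_of_mul (hC ▸ pow_ne_zero 2 hb))
  refine ⟨ht0, ?_⟩
  have hnl : n - l = b / t := by
    rw [eq_div_iff ht0]
    apply mul_left_cancel₀ hb
    rw [ht] at hC
    linear_combination hC
  linear_combination -hnl

lemma hasDerivAt_ratio_of_eventually_mul_eq_sq {α β l ν τ : ℝ → ℝ} {A B L N s : ℝ}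
    (hα : HasDerivAt α A s) (hβ : HasDerivAt β B s) (hl : HasDerivAt l L s)
    (hν : HasDerivAt ν N s) (hb : β s ≠ 0)
    (hC : ∀ᶠ u in 𝓝 s, (ν u - α u) * (ν u - l u) = β u ^ 2)
    (hτ : ∀ u, τ u = (ν u - α u) / β u) :
    HasDerivAt τ (τ s * (B * (1 - τ s ^ 2) + τ s * (L - A)) / (β s * (1 + τ s ^ 2))) s := by
  have hF : HasDerivAt (fun u => (ν u - α u) * (ν u - l u) - β u ^ 2)
      ((N - A) * (ν s - l s) + (ν s - α s) * (N - L) - 2 * β s * B) s := by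
    refine (((hν.fun_sub hα).fun_mul (hν.fun_sub hl)).fun_sub (hβ.fun_pow 2)).congr_deriv ?_
    ring
  have hF0 : (N - A) * (ν s - l s) + (ν s - α s) * (N - L) - 2 * β s * B = 0 :=
    hF.unique <| (hasDerivAt_const s 0).congr_of_eventuallyEq <|
      hC.mono fun u hu => by simp [hu]
  have hτs : ν s - α s = β s * τ s := by rw [hτ]; field_simp
  obtain ⟨hτ0, hls⟩ := ne_zero_and_eq_sub_div_of_mul_eq_sq hb hC.self_of_nhds hτs
  have hd : HasDerivAt τ (((N - A) * β s - (ν s - α s) * B) / β s ^ 2) s := by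
    rw [show τ = fun u => (ν u - α u) / β u from funext hτ]
    exact (hν.sub hα).div hβ hb
  convert hd using 1
  have hN : N * (1 + τ s ^ 2) = 2 * τ s * B + A + τ s ^ 2 * L := by
    rw [hls, hτs] at hF0
    field_simp at hF0
    apply mul_left_cancel₀ hb
    linear_combination hF0
  rw [hτs, div_eq_div_iff (by positivity) (by positivity)]
  linear_combination -β s ^ 2 * hN

lemma ratio_deriv_ode_eq {a b l n c t : ℝ} (hb : b ≠ 0) (hC : (n - a) * (n - l) = b ^ 2)
    (ht : n - a = b * t) :
    t * ((b ^ 2 + l ^ 2 + n * (a - 2 * l) + c) * (1 - t ^ 2)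
        + t * ((l - n) * (l ^ 2 - a * l - c) / b + b * (2 * l + n) - b * (a + l - 3 * n)))
        / (b * (1 + t ^ 2))
      = n * (1 + t ^ 2) + c * t * (2 - t ^ 2) / (b * (1 + t ^ 2)) := by
  obtain ⟨ht0, rfl⟩ := ne_zero_and_eq_sub_div_of_mul_eq_sq hb hC ht
  obtain rfl : a = n - b * t := by linarith
  have : 1 + t ^ 2 ≠ 0 := by positivity
  field_simp
  ring

theorem stmt9_general (c : ℝ) (I : Set ℝ) (hI : IsOpen I)
    (α β l ν : ℝ → ℝ)
    (h : ∀ s ∈ I, β s ≠ 0 ∧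
      (ν s - α s) * (ν s - l s) = (β s) ^ 2 ∧
      HasDerivAt α (β s * (α s + l s - 3 * ν s)) s ∧
      HasDerivAt β ((β s) ^ 2 + (l s) ^ 2 + ν s * (α s - 2 * l s) + c) s ∧
      HasDerivAt l
        ((l s - ν s) * ((l s) ^ 2 - α s * l s - c) / β s + β s * (2 * l s + ν s)) s ∧
      DifferentiableAt ℝ ν s)
    (τ : ℝ → ℝ) (hτ : ∀ s, τ s = (ν s - α s) / β s) :
    ∀ s ∈ I, HasDerivAt τ
      (ν s * (1 + (τ s) ^ 2) + c * τ s * (2 - (τ s) ^ 2) / (β s * (1 + (τ s) ^ 2))) s := by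
  intro s hs
  obtain ⟨hb, hC, hα, hβ, hl, hν⟩ := h s hs
  have hC_nhds : ∀ᶠ u in 𝓝 s, (ν u - α u) * (ν u - l u) = β u ^ 2 :=
    eventually_of_mem (hI.mem_nhds hs) fun u hu => (h u hu).2.1
  have hτs : ν s - α s = β s * τ s := by rw [hτ]; field_simp
  rw [← ratio_deriv_ode_eq hb hC hτs]
  exact hasDerivAt_ratio_of_eventually_mul_eq_sq hα hβ hl hν.hasDerivAt hb hC_nhds hτ

/-- Along a solution of the ODE system (4.3) satisfying the constraint
`(ν − α)(ν − λ) = β²` with `β` nonvanishing, the quantity `τ = (ν − α)/β` is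
differentiable with derivative `ν(1 + τ²) + cτ(2 − τ²)/(β(1 + τ²))`
(equation (5.10) of the paper). -/
theorem stmt9 (c : ℝ) (I : Set ℝ) (hI : IsOpen I) (hI' : I.OrdConnected)
    (α β l ν : ℝ → ℝ)
    (h : ∀ s ∈ I, β s ≠ 0 ∧
      (ν s - α s) * (ν s - l s) = (β s) ^ 2 ∧
      HasDerivAt α (β s * (α s + l s - 3 * ν s)) s ∧
      HasDerivAt β ((β s) ^ 2 + (l s) ^ 2 + ν s * (α s - 2 * l s) + c) s ∧
      HasDerivAt l
        ((l s - ν s) * ((l s) ^ 2 - α s * l s - c) / β s + β s * (2 * l s + ν s)) s ∧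
      DifferentiableAt ℝ ν s)
    (τ : ℝ → ℝ) (hτ : ∀ s, τ s = (ν s - α s) / β s) :
    ∀ s ∈ I, HasDerivAt τ
      (ν s * (1 + (τ s) ^ 2) + c * τ s * (2 - (τ s) ^ 2) / (β s * (1 + (τ s) ^ 2))) s :=
  stmt9_general c I hI α β l ν h τ hτ
end
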